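/- Let (E⁺_p, E⁻_p)_{p} be a finitely supported solution of the truncated xNLCME ODE system (no Z-dependence): dE_p⁺/dT = ipN_{2p}E_p⁻ + ip(Γ/3)[Σ_{q,r}E_q⁺E_r⁺E⁺_{p−q−r} + 3(Σ_q|E_q⁻|²)E_p⁺], dE_p⁻/dT = ip conj(N_{2p})E_p⁺ + ip(Γ/3)[Σ_{q,r}E_q⁻E_r⁻E⁻_{p−q−r} + 3(Σ_q|E_q⁺|²)E_p⁻], with reality conditions E^±_{−p} = conj(E^±_p), conj(N_k) = N_{−k}. Then Σ_p(|E_p⁺(T)|² + |E_p⁻(T)|²) is constant in T. -/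

import Mathlib

open Complex

open Function ComplexConjugate

/-!
Each mode contributes `2 Re (conj E_p · dE_p/dT)` to the derivative of the mass. After pairing,
the linear coupling and the self-phase terms are purely imaginary, so what remains for each
polarization is `-(2Γ/3) Im Σ_p p conj E_p (E ⋆ E ⋆ E)_p`. By the reality condition
`conj E_p = E_{-p}` this is a sum over momenta `(-p, q, r, p - q - r)` adding up to zero, with a
weight symmetric in the four of them; symmetrizing the factor `-p` over the four momenta gives
`(-p + q + r + (p - q - r)) / 4 = 0`.
-/

lemma hasDerivAt_finsum {ι 𝕜 F : Type*} [NontriviallyNormedField 𝕜] [NormedAddCommGroup F]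
    [NormedSpace 𝕜 F] {f : ι → 𝕜 → F} {f' : ι → F} {x : 𝕜} (S : Finset ι)
    (hS : ∀ i ∉ S, f i = 0) (hf : ∀ i, HasDerivAt (f i) (f' i) x) :
    HasDerivAt (fun t => ∑ᶠ i, f i t) (∑ᶠ i, f' i) x := by
  have hf' : ∀ i ∉ S, f' i = 0 := fun i hi => (hf i).unique (by simp [hS i hi])
  rw [finsum_eq_sum_of_support_subset f' (support_subset_iff'.2 hf')]
  have hsum : (fun t => ∑ᶠ i, f i t) = fun t => ∑ i ∈ S, f i t := funext fun t =>
    finsum_eq_sum_of_support_subset _ (support_subset_iff'.2 fun i hi => by simp [hS i hi])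
  exact hsum ▸ HasDerivAt.fun_sum fun i _ => hf i

section Quartic

variable {K : Type*} [Field K] (a : ℤ → K)

noncomputable def convCube (p : ℤ) : K := ∑ᶠ q, ∑ᶠ r, a q * a r * a (p - q - r)

def quarticWeight (x : ℤ × ℤ × ℤ) : K :=
  a (-x.1) * a x.2.1 * a x.2.2 * a (x.1 - x.2.1 - x.2.2)

variable {a}

lemma hasFiniteSupport_quarticWeight (ha : a.HasFiniteSupport) :
    (quarticWeight a).HasFiniteSupport := by
  refine ((ha.preimage neg_injective.injOn).prod (ha.prod ha)).subset fun x hx => ?_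
  simp only [mem_support, quarticWeight, ne_eq, mul_eq_zero, not_or] at hx
  exact ⟨hx.1.1.1, hx.1.1.2, hx.1.2⟩

lemma finsum_mul_quarticWeight_comp_of_involutive {f : ℤ × ℤ × ℤ → ℤ × ℤ × ℤ}
    (hf : Involutive f) (hfw : ∀ x, quarticWeight a (f x) = quarticWeight a x)
    (c : ℤ × ℤ × ℤ → K) :
    ∑ᶠ x, c (f x) * quarticWeight a x = ∑ᶠ x, c x * quarticWeight a x := by
  simpa only [Involutive.coe_toPerm, hfw] using
    finsum_comp_equiv hf.toPerm (f := fun x => c x * quarticWeight a x)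

lemma finsum_fst_mul_quarticWeight_eq_zero [CharZero K] (ha : a.HasFiniteSupport) :
    ∑ᶠ x : ℤ × ℤ × ℤ, (x.1 : K) * quarticWeight a x = 0 := by
  have hw := hasFiniteSupport_quarticWeight ha
  set V := hw.toFinset
  have hV (c : ℤ × ℤ × ℤ → K) :
      ∑ᶠ x, c x * quarticWeight a x = ∑ x ∈ V, c x * quarticWeight a x :=
    finsum_eq_sum_of_support_subset _ <| (support_mul_subset_right _ _).trans hw.coe_toFinset.ge
  have hq : ∑ᶠ x, (x.2.1 : K) * quarticWeight a x
      = ∑ᶠ x, (-x.1 : K) * quarticWeight a x := by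
    convert finsum_mul_quarticWeight_comp_of_involutive (f := fun x => (-x.2.1, -x.1, x.2.2))
      (fun x => by simp) (fun x => by simp only [quarticWeight]; ring_nf) (fun x => -(x.1 : K))
      using 3 with x
    push_cast; ring
  have hr : ∑ᶠ x, (x.2.2 : K) * quarticWeight a x
      = ∑ᶠ x, (-x.1 : K) * quarticWeight a x := by
    convert finsum_mul_quarticWeight_comp_of_involutive (f := fun x => (-x.2.2, x.2.1, -x.1))
      (fun x => by simp) (fun x => by simp only [quarticWeight]; ring_nf) (fun x => -(x.1 : K))
      using 3 with x
    push_cast; ring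
  have ht : ∑ᶠ x, ((x.1 - x.2.1 - x.2.2 : ℤ) : K) * quarticWeight a x
      = ∑ᶠ x, (-x.1 : K) * quarticWeight a x := by
    convert finsum_mul_quarticWeight_comp_of_involutive
      (f := fun x => (x.2.1 + x.2.2 - x.1, x.2.1, x.2.2))
      (fun x => by simp) (fun x => by simp only [quarticWeight]; ring_nf) (fun x => -(x.1 : K))
      using 3 with x
    push_cast; ring
  have hsum : ∑ x ∈ V, ((-x.1 : K) + x.2.1 + x.2.2 + ((x.1 - x.2.1 - x.2.2 : ℤ) : K))
      * quarticWeight a x = 0 := Finset.sum_eq_zero fun x _ => by push_cast; ring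
  simp only [add_mul, Finset.sum_add_distrib, ← hV, hq, hr, ht] at hsum
  have hneg : ∑ᶠ x, (-x.1 : K) * quarticWeight a x
      = -∑ᶠ x, (x.1 : K) * quarticWeight a x := by
    simp only [neg_mul, finsum_neg_distrib]
  rw [hneg] at hsum
  linear_combination -hsum / 4

lemma finsum_mul_convCube_eq_finsum_quarticWeight (ha : a.HasFiniteSupport) :
    ∑ᶠ p : ℤ, (p : K) * (a (-p) * convCube a p)
      = ∑ᶠ x : ℤ × ℤ × ℤ, (x.1 : K) * quarticWeight a x := by
  rw [finsum_curry₃ (fun x : ℤ × ℤ × ℤ => (x.1 : K) * quarticWeight a x)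
    ((hasFiniteSupport_quarticWeight ha).mul_right _)]
  refine finsum_congr fun p => ?_
  simp only [convCube, mul_finsum, quarticWeight]
  exact finsum_congr fun q => finsum_congr fun r => by ring

lemma finsum_mul_convCube_eq_zero [CharZero K] (ha : a.HasFiniteSupport) :
    ∑ᶠ p : ℤ, (p : K) * (a (-p) * convCube a p) = 0 := by
  rw [finsum_mul_convCube_eq_finsum_quarticWeight ha, finsum_fst_mul_quarticWeight_eq_zero ha]

end Quartic

lemma sum_intCast_mul_conj_mul_convCube_eq_zero {a : ℤ → ℂ} (S : Finset ℤ)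
    (hS : ∀ p ∉ S, a p = 0) (hreal : ∀ p, a (-p) = conj (a p)) :
    ∑ p ∈ S, (p : ℂ) * (conj (a p) * convCube a p) = 0 := by
  rw [← finsum_eq_sum_of_support_subset _ (support_subset_iff'.2 fun p hp => by simp [hS p hp])]
  simp_rw [← hreal]
  exact finsum_mul_convCube_eq_zero (S.finite_toSet.subset (support_subset_iff'.2 hS))

lemma two_mul_inner_rhs_add_two_mul_inner_rhs (p : ℤ) (γ ma mb : ℝ) (n a b c d : ℂ) :
    2 * inner ℝ a (I * p * n * b + I * p * γ * (c + 3 * (mb : ℂ) * a))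
      + 2 * inner ℝ b (I * p * conj n * a + I * p * γ * (d + 3 * (ma : ℂ) * b))
      = -(2 * γ) * (p * (conj a * c) + p * (conj b * d)).im := by
  simp only [Complex.inner, mul_re, mul_im, add_re, add_im, conj_re, conj_im, I_re, I_im,
    intCast_re, intCast_im, ofReal_re, ofReal_im, re_ofNat, im_ofNat]
  ring

theorem stmt_18_general (Ep Em : ℤ → ℝ → ℂ) (N : ℤ → ℂ) (Γ : ℝ) (S : Finset ℤ)
    (hS : ∀ p ∉ S, ∀ T : ℝ, Ep p T = 0 ∧ Em p T = 0)
    (hrealE : ∀ p : ℤ, ∀ T : ℝ, Ep (-p) T = starRingEnd ℂ (Ep p T) ∧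
      Em (-p) T = starRingEnd ℂ (Em p T))
    (hodeP : ∀ p : ℤ, ∀ T : ℝ,
      HasDerivAt (Ep p)
        (Complex.I * p * N (2 * p) * Em p T
          + Complex.I * p * (Γ / 3) *
            ((∑ᶠ q : ℤ, ∑ᶠ r : ℤ, Ep q T * Ep r T * Ep (p - q - r) T)
              + 3 * ((∑ᶠ q : ℤ, (‖Em q T‖ ^ 2 : ℝ)) : ℝ) * Ep p T)) T)
    (hodeM : ∀ p : ℤ, ∀ T : ℝ,
      HasDerivAt (Em p)
        (Complex.I * p * starRingEnd ℂ (N (2 * p)) * Ep p T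
          + Complex.I * p * (Γ / 3) *
            ((∑ᶠ q : ℤ, ∑ᶠ r : ℤ, Em q T * Em r T * Em (p - q - r) T)
              + 3 * ((∑ᶠ q : ℤ, (‖Ep q T‖ ^ 2 : ℝ)) : ℝ) * Em p T)) T) :
    ∀ T₁ T₂ : ℝ,
      ∑ᶠ p : ℤ, (‖Ep p T₁‖ ^ 2 + ‖Em p T₁‖ ^ 2)
        = ∑ᶠ p : ℤ, (‖Ep p T₂‖ ^ 2 + ‖Em p T₂‖ ^ 2) := by
  suffices hmass : ∀ T, HasDerivAt (fun t => ∑ᶠ p : ℤ, (‖Ep p t‖ ^ 2 + ‖Em p t‖ ^ 2)) 0 T from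
    is_const_of_deriv_eq_zero (fun t => (hmass t).differentiableAt) (fun t => (hmass t).deriv)
  intro T
  have hγ : (Γ : ℂ) / 3 = ((Γ / 3 : ℝ) : ℂ) := by push_cast; rfl
  simp only [hγ] at hodeP hodeM
  refine (hasDerivAt_finsum S (fun p hp => funext fun t => by simp [hS p hp t])
    fun p => ((hodeP p T).norm_sq).add ((hodeM p T).norm_sq)).congr_deriv ?_
  simp only [two_mul_inner_rhs_add_two_mul_inner_rhs]
  have hquarticP := sum_intCast_mul_conj_mul_convCube_eq_zero S (fun p hp => (hS p hp T).1)
    fun p => (hrealE p T).1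
  have hquarticM := sum_intCast_mul_conj_mul_convCube_eq_zero S (fun p hp => (hS p hp T).2)
    fun p => (hrealE p T).2
  simp only [convCube] at hquarticP hquarticM
  rw [finsum_eq_sum_of_support_subset _ (support_subset_iff'.2 fun p hp => by simp [hS p hp T]),
    ← Finset.mul_sum, ← Complex.im_sum, Finset.sum_add_distrib, hquarticP, hquarticM]
  simp

theorem stmt_18 (Ep Em : ℤ → ℝ → ℂ) (N : ℤ → ℂ) (Γ : ℝ) (S : Finset ℤ)
    (hS : ∀ p ∉ S, ∀ T : ℝ, Ep p T = 0 ∧ Em p T = 0)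
    (hrealE : ∀ p : ℤ, ∀ T : ℝ, Ep (-p) T = starRingEnd ℂ (Ep p T) ∧
      Em (-p) T = starRingEnd ℂ (Em p T))
    (hrealN : ∀ k : ℤ, starRingEnd ℂ (N k) = N (-k))
    (hodeP : ∀ p : ℤ, ∀ T : ℝ,
      HasDerivAt (Ep p)
        (Complex.I * p * N (2 * p) * Em p T
          + Complex.I * p * (Γ / 3) *
            ((∑ᶠ q : ℤ, ∑ᶠ r : ℤ, Ep q T * Ep r T * Ep (p - q - r) T)
              + 3 * ((∑ᶠ q : ℤ, (‖Em q T‖ ^ 2 : ℝ)) : ℝ) * Ep p T)) T)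
    (hodeM : ∀ p : ℤ, ∀ T : ℝ,
      HasDerivAt (Em p)
        (Complex.I * p * starRingEnd ℂ (N (2 * p)) * Ep p T
          + Complex.I * p * (Γ / 3) *
            ((∑ᶠ q : ℤ, ∑ᶠ r : ℤ, Em q T * Em r T * Em (p - q - r) T)
              + 3 * ((∑ᶠ q : ℤ, (‖Ep q T‖ ^ 2 : ℝ)) : ℝ) * Em p T)) T) :
    ∀ T₁ T₂ : ℝ,
      ∑ᶠ p : ℤ, (‖Ep p T₁‖ ^ 2 + ‖Em p T₁‖ ^ 2)
        = ∑ᶠ p : ℤ, (‖Ep p T₂‖ ^ 2 + ‖Em p T₂‖ ^ 2) :=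
  stmt_18_general Ep Em N Γ S hS hrealE hodeP hodeM
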